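/- There is a unique polynomial Φ(z,ν) in two variables, of degree m in ν with leading ν-coefficient 1 and with all coefficients real, such that D(z,τ) = (2τ)^m·Φ(z, (τ + τ⁻¹)/2) for all z ∈ ℂ and all τ ∈ ℂ with τ ≠ 0. -/

import Mathlib

open Matrix Polynomial

/-- Fundamental matrix-valued solutions of the Jacobi recursion
`y_{n+1} = a_n⁻¹ ((z I - b_n) y_n - a_{n-1}ᵀ y_{n-1})`. -/
noncomputable def matSol {m : ℕ} (a b : ℤ → Matrix (Fin m) (Fin m) ℝ) (z : ℂ)
    (y0 y1 : Matrix (Fin m) (Fin m) ℂ) : ℕ → Matrix (Fin m) (Fin m) ℂ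
  | 0 => y0
  | 1 => y1
  | n + 2 =>
      (((a ((n : ℤ) + 1))⁻¹).map Complex.ofReal) *
        ((z • (1 : Matrix (Fin m) (Fin m) ℂ) - (b ((n : ℤ) + 1)).map Complex.ofReal) *
            matSol a b z y0 y1 (n + 1) -
          ((a (n : ℤ)).map Complex.ofReal)ᵀ * matSol a b z y0 y1 n)

/-- The monodromy matrix `ℳ_p(z) = [[θ_p, φ_p], [θ_{p+1}, φ_{p+1}]]`. -/
noncomputable def monodromy {m : ℕ} (a b : ℤ → Matrix (Fin m) (Fin m) ℝ) (p : ℕ) (z : ℂ) :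
    Matrix (Fin m ⊕ Fin m) (Fin m ⊕ Fin m) ℂ :=
  Matrix.fromBlocks (matSol a b z 1 0 p) (matSol a b z 0 1 p)
    (matSol a b z 1 0 (p + 1)) (matSol a b z 0 1 (p + 1))

/-- `D(z,τ) = det(ℳ_p(z) - τ I_{2m})`. -/
noncomputable def Dfun {m : ℕ} (a b : ℤ → Matrix (Fin m) (Fin m) ℝ) (p : ℕ) (z τ : ℂ) : ℂ :=
  (monodromy a b p z - τ • (1 : Matrix (Fin m ⊕ Fin m) (Fin m ⊕ Fin m) ℂ)).det

/-- Value of a real two-variable polynomial `Φ(z,ν)` (inner variable `z`, outer variable `ν`)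
at complex arguments. -/
noncomputable def evalPhi (Φ : Polynomial (Polynomial ℝ)) (z ν : ℂ) : ℂ :=
  Polynomial.eval z
    (Polynomial.eval (Polynomial.C ν) (Φ.map (Polynomial.mapRingHom Complex.ofRealHom)))

/-! Each one-step transfer matrix `Tₙ` of the Jacobi recursion preserves the Wronskian form
`Jₙ = [[0, aₙ], [-aₙᵀ, 0]]`, in the sense `Tₙᵀ Jₙ₊₁ Tₙ = Jₙ`, and `det Tₙ = det aₙ / det aₙ₊₁`.
By periodicity the monodromy matrix satisfies `ℳᵀ J₀ ℳ = J₀` and `det ℳ = 1`, hence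
`det (1 - τ ℳ) = det (ℳ - τ)`: the characteristic polynomial of `ℳ` is palindromic. Doing this
over `ℝ[z]` makes `D` a palindromic polynomial of degree `2m` in `τ` with coefficients in `ℝ[z]`,
and such a polynomial is `τ ^ m` times a polynomial of degree `m` in `ν = (τ + τ⁻¹) / 2`, because
`2 Tⱼ(ν) = τ ^ j + τ ^ (-j)` for the Chebyshev polynomials `Tⱼ`. Uniqueness holds because `ν`
takes every complex value on `τ ≠ 0`. -/

namespace Matrix

variable {R : Type*} [CommRing R] {n : Type*} [Fintype n] [DecidableEq n]

theorem det_sub_smul_one_of_even (M : Matrix n n R) (t : R) (hn : Even (Fintype.card n)) :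
    (M - t • (1 : Matrix n n R)).det = (t • (1 : Matrix n n R) - M).det := by
  rw [← neg_sub, det_neg, hn.neg_one_pow, one_mul]

theorem charpoly_eq_det_smul_one_sub (M : Matrix n n R) :
    M.charpoly = ((X : R[X]) • (1 : Matrix n n R[X]) - M.map C).det := by
  rw [charpoly, charmatrix, smul_one_eq_diagonal, scalar_apply, RingHom.mapMatrix_apply]

theorem reverse_charpoly_of_transpose_mul_mul_self (M J : Matrix n n R) (hMJ : Mᵀ * J * M = J)
    (hJ : IsUnit J.det) (hM : M.det = 1) (hn : Even (Fintype.card n)) :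
    M.charpoly.reverse = M.charpoly := by
  have hNK : (M.map C)ᵀ * J.map C * M.map C = J.map C := by
    simpa only [Matrix.map_mul, Matrix.transpose_map] using congrArg (·.map C) hMJ
  have hfactor : (M.map C)ᵀ * J.map C * (1 - (X : R[X]) • M.map C) =
      ((M.map C)ᵀ - (X : R[X]) • 1) * J.map C := by
    rw [Matrix.mul_sub, Matrix.mul_one, Matrix.mul_smul, hNK, Matrix.sub_mul, Matrix.smul_mul,
      Matrix.one_mul]
  have hK : IsUnit (J.map C).det := by
    simpa only [← RingHom.mapMatrix_apply, ← RingHom.map_det] using hJ.map C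
  have hN : (M.map C).det = 1 := by
    rw [← RingHom.mapMatrix_apply, ← RingHom.map_det, hM, map_one]
  have hdet := congrArg det hfactor
  rw [det_mul, det_mul, det_mul, det_transpose, hN, one_mul, mul_comm] at hdet
  rw [reverse_charpoly, charpolyRev, hK.mul_left_inj.mp hdet, ← det_transpose,
    transpose_sub, transpose_transpose, transpose_smul, transpose_one,
    det_sub_smul_one_of_even _ _ hn, charpoly_eq_det_smul_one_sub]

theorem det_fromBlocks_zero₁₁_one₁₂ (C D : Matrix n n R) :
    (fromBlocks 0 1 C D).det = (-C).det := by
  have hmul : fromBlocks 0 1 C D * fromBlocks (1 : Matrix n n R) (0 : Matrix n n R) 1 1 =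
      fromBlocks (1 : Matrix n n R) 1 (C + D) D := by
    simp [fromBlocks_multiply]
  have hunit : (fromBlocks (1 : Matrix n n R) (0 : Matrix n n R) 1 1).det = 1 := by
    rw [det_fromBlocks_zero₁₂, det_one, one_mul]
  rw [← mul_one (fromBlocks 0 1 C D).det, ← hunit, ← det_mul, hmul, det_fromBlocks_one₁₁,
    Matrix.mul_one, sub_add_cancel_right]

theorem transpose_mul_mul_fromBlocks_zero_one {A A' A'inv S : Matrix n n R}
    (hA' : A' * A'inv = 1) (hS : Sᵀ = S) :
    (fromBlocks 0 1 (-(A'inv * Aᵀ)) (A'inv * S))ᵀ * fromBlocks 0 A' (-A'ᵀ) 0 *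
      fromBlocks 0 1 (-(A'inv * Aᵀ)) (A'inv * S) = fromBlocks 0 A (-Aᵀ) 0 := by
  have hA'T : A'invᵀ * A'ᵀ = 1 := by rw [← transpose_mul, hA', transpose_one]
  simp only [fromBlocks_transpose, fromBlocks_multiply, transpose_neg, transpose_mul, hS,
    transpose_zero, transpose_one]
  simp [Matrix.mul_assoc, hA'T, ← Matrix.mul_assoc A', hA']

theorem map_mul_map_nonsing_inv {S : Type*} [CommRing S] (f : R →+* S) {A : Matrix n n R}
    (hA : IsUnit A.det) : A.map f * A⁻¹.map f = 1 := by
  rw [← Matrix.map_mul, mul_nonsing_inv _ hA, Matrix.map_one _ (map_zero f) (map_one f)]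

end Matrix

theorem Finset.sum_range_two_mul_add_one {M : Type*} [AddCommMonoid M] (u : ℕ → M) (m : ℕ) :
    ∑ k ∈ Finset.range (2 * m + 1), u k =
      u m + ∑ j ∈ Finset.range m, (u (m - 1 - j) + u (m + 1 + j)) := by
  rw [two_mul, add_assoc, Finset.sum_range_add, Finset.sum_range_succ',
    ← Finset.sum_range_reflect, Finset.sum_add_distrib]
  simp only [add_zero, add_comm 1, add_assoc]
  abel

theorem Polynomial.Chebyshev.two_mul_T_eval_half_add_inv {K : Type*} [Field K] [NeZero (2 : K)]
    {τ : K} (hτ : τ ≠ 0) (n : ℕ) :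
    2 * (T K n).eval ((τ + τ⁻¹) / 2) = τ ^ n + τ⁻¹ ^ n := by
  have h := congrArg (eval ((τ + τ⁻¹) / 2)) (C_comp_two_mul_X K n)
  rw [eval_comp, eval_mul, eval_X, eval_ofNat, mul_div_cancel₀ _ two_ne_zero,
    ← dickson_one_one_eq_chebyshev_C, dickson_one_one_eval_add_inv _ _ (mul_inv_cancel₀ hτ),
    eval_mul, eval_ofNat] at h
  exact h.symm

namespace Polynomial

open Finset

variable {S : Type*} [CommRing S]

noncomputable def palindromicReduction (f : S[X]) (m : ℕ) : S[X] :=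
  C (f.coeff m) + ∑ j ∈ range m, C (2 * f.coeff (m + 1 + j)) * Chebyshev.T S (j + 1 : ℕ)

theorem eval₂_eq_pow_mul_eval₂_palindromicReduction {K : Type*} [Field K] [NeZero (2 : K)]
    (φ : S →+* K) {f : S[X]} {m : ℕ} (hdeg : f.natDegree ≤ 2 * m) (hf : f.reflect (2 * m) = f)
    {τ : K} (hτ : τ ≠ 0) :
    f.eval₂ φ τ = τ ^ m * (palindromicReduction f m).eval₂ φ ((τ + τ⁻¹) / 2) := by
  have hsymm {j : ℕ} (hj : j < m) : f.coeff (m - 1 - j) = f.coeff (m + 1 + j) := by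
    conv_rhs => rw [← hf, coeff_reflect, revAt_le (by omega)]
    congr 1
    omega
  have hpow {j : ℕ} (hj : j < m) : τ ^ (m - 1 - j) = τ ^ m * τ⁻¹ ^ (j + 1) := by
    rw [show m - 1 - j = m - (j + 1) by omega, pow_sub₀ _ hτ (by omega), inv_pow]
  rw [eval₂_eq_sum_range' φ (Nat.lt_succ_of_le hdeg), sum_range_two_mul_add_one,
    palindromicReduction, eval₂_add, eval₂_C, eval₂_finsetSum, mul_add, mul_comm (τ ^ m),
    mul_sum]
  congr 1
  refine sum_congr rfl fun j hj => ?_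
  have hj := mem_range.mp hj
  rw [eval₂_mul, eval₂_C, eval₂_eq_eval_map, Chebyshev.map_T, map_mul, map_ofNat, hsymm hj,
    hpow hj]
  linear_combination
    (-(τ ^ m * φ (f.coeff (m + 1 + j)))) * Chebyshev.two_mul_T_eval_half_add_inv hτ (j + 1)

variable [IsDomain S] [NeZero (2 : S)]

theorem natDegree_C_mul_T_le (c : S) (n : ℕ) : (C c * Chebyshev.T S n).natDegree ≤ n :=
  (natDegree_C_mul_le _ _).trans (Chebyshev.natDegree_T S n).le

theorem natDegree_palindromicReduction_le (f : S[X]) (m : ℕ) :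
    (palindromicReduction f m).natDegree ≤ m := by
  refine natDegree_add_le_of_degree_le (by simp) (natDegree_sum_le_of_forall_le _ _ fun j hj => ?_)
  exact (natDegree_C_mul_T_le _ _).trans (mem_range.mp hj)

theorem coeff_palindromicReduction_self (f : S[X]) (m : ℕ) :
    (palindromicReduction f m).coeff m = 2 ^ m * f.coeff (2 * m) := by
  cases m with
  | zero => simp [palindromicReduction]
  | succ m =>
    have hlow : ∀ j ∈ range m,
        (C (2 * f.coeff (m + 1 + 1 + j)) * Chebyshev.T S (j + 1 : ℕ)).coeff (m + 1) = 0 :=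
      fun j hj =>
        coeff_eq_zero_of_natDegree_lt ((natDegree_C_mul_T_le _ _).trans_lt (by simpa using hj))
    have hT : (Chebyshev.T S (m + 1 : ℕ)).coeff (m + 1) = 2 ^ m := by
      have h := Chebyshev.leadingCoeff_T S (m + 1 : ℕ)
      rwa [leadingCoeff, Chebyshev.natDegree_T, Int.natAbs_natCast, Nat.add_sub_cancel] at h
    rw [palindromicReduction, coeff_add, coeff_C, if_neg (by omega), finsetSum_coeff,
      sum_range_succ, sum_eq_zero hlow, zero_add, zero_add, coeff_C_mul, hT,
      show m + 1 + 1 + m = 2 * (m + 1) by omega]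
    ring

end Polynomial

section Jacobi

variable {𝕜 R : Type*} [CommRing 𝕜] [CommRing R] [Algebra 𝕜 R] {ι : Type*} [Fintype ι]
  [DecidableEq ι]

/-- Maps the state `(yₙ, yₙ₊₁)` of a solution of the recursion to `(yₙ₊₁, yₙ₊₂)`. -/
noncomputable def transferMatrix (a b : ℤ → Matrix ι ι 𝕜) (x : R) (n : ℤ) :
    Matrix (ι ⊕ ι) (ι ⊕ ι) R :=
  fromBlocks 0 1
    (-((a (n + 1))⁻¹.map (algebraMap 𝕜 R) * ((a n).map (algebraMap 𝕜 R))ᵀ))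
    ((a (n + 1))⁻¹.map (algebraMap 𝕜 R) * (x • 1 - (b (n + 1)).map (algebraMap 𝕜 R)))

noncomputable def fundamentalMatrix (a b : ℤ → Matrix ι ι 𝕜) (x : R) :
    ℕ → Matrix (ι ⊕ ι) (ι ⊕ ι) R
  | 0 => 1
  | n + 1 => transferMatrix a b x n * fundamentalMatrix a b x n

noncomputable def wronskianForm (a : ℤ → Matrix ι ι 𝕜) (n : ℤ) : Matrix (ι ⊕ ι) (ι ⊕ ι) R :=
  fromBlocks 0 ((a n).map (algebraMap 𝕜 R)) (-((a n).map (algebraMap 𝕜 R))ᵀ) 0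

variable (a b : ℤ → Matrix ι ι 𝕜) (x : R)

theorem transpose_transferMatrix_mul_wronskianForm_mul {n : ℤ} (ha : IsUnit (a (n + 1)).det)
    (hb : (b (n + 1))ᵀ = b (n + 1)) :
    (transferMatrix a b x n)ᵀ * wronskianForm a (n + 1) * transferMatrix a b x n =
      wronskianForm a n := by
  refine transpose_mul_mul_fromBlocks_zero_one (map_mul_map_nonsing_inv _ ha) ?_
  rw [transpose_sub, transpose_smul, transpose_one, ← transpose_map, hb]

theorem transpose_fundamentalMatrix_mul_wronskianForm_mul (ha : ∀ n, IsUnit (a n).det)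
    (hb : ∀ n, (b n)ᵀ = b n) (n : ℕ) :
    (fundamentalMatrix a b x n)ᵀ * wronskianForm a n * fundamentalMatrix a b x n =
      wronskianForm a 0 := by
  induction n with
  | zero => simp [fundamentalMatrix]
  | succ n ih =>
    rw [fundamentalMatrix, transpose_mul, Nat.cast_succ]
    calc _ = (fundamentalMatrix a b x n)ᵀ * ((transferMatrix a b x n)ᵀ *
          wronskianForm a (n + 1) * transferMatrix a b x n) * fundamentalMatrix a b x n := by
          simp only [Matrix.mul_assoc]
      _ = _ := by rw [transpose_transferMatrix_mul_wronskianForm_mul a b x (ha _) (hb _), ih]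

theorem det_transferMatrix_mul {n : ℤ} (ha : IsUnit (a (n + 1)).det) :
    (transferMatrix a b x n).det * ((a (n + 1)).map (algebraMap 𝕜 R)).det =
      ((a n).map (algebraMap 𝕜 R)).det := by
  rw [transferMatrix, det_fromBlocks_zero₁₁_one₁₂, neg_neg, det_mul, det_transpose, mul_comm,
    ← mul_assoc, ← det_mul, map_mul_map_nonsing_inv _ ha,
    det_one, one_mul]

theorem det_fundamentalMatrix_mul (ha : ∀ n, IsUnit (a n).det) (n : ℕ) :
    (fundamentalMatrix a b x n).det * ((a n).map (algebraMap 𝕜 R)).det =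
      ((a 0).map (algebraMap 𝕜 R)).det := by
  induction n with
  | zero => simp [fundamentalMatrix]
  | succ n ih =>
    rw [fundamentalMatrix, det_mul, Nat.cast_succ, mul_comm (transferMatrix a b x n).det,
      mul_assoc, det_transferMatrix_mul a b x (ha _), ih]

section map

variable {S : Type*} [CommRing S] [Algebra 𝕜 S] (f : R →ₐ[𝕜] S)

theorem map_transferMatrix (n : ℤ) :
    (transferMatrix a b x n).map f = transferMatrix a b (f x) n := by
  have hsmul : (x • 1 : Matrix ι ι R).map f = f x • 1 := by
    rw [smul_one_eq_diagonal, smul_one_eq_diagonal, diagonal_map (map_zero f)]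
  have halg (M : Matrix ι ι 𝕜) : (M.map (algebraMap 𝕜 R)).map f = M.map (algebraMap 𝕜 S) := by
    ext; simp
  rw [transferMatrix, transferMatrix, fromBlocks_map, ← transpose_map, ← transpose_map]
  simp only [← AlgHom.mapMatrix_apply, map_zero, map_one, map_neg, map_mul, map_sub]
  simp only [AlgHom.mapMatrix_apply, halg, hsmul]

theorem map_fundamentalMatrix (n : ℕ) :
    (fundamentalMatrix a b x n).map f = fundamentalMatrix a b (f x) n := by
  induction n with
  | zero => simp [fundamentalMatrix]
  | succ n ih =>
    simp only [fundamentalMatrix, ← AlgHom.mapMatrix_apply, map_mul] at ih ⊢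
    rw [ih, AlgHom.mapMatrix_apply, map_transferMatrix]

end map

theorem isUnit_det_wronskianForm {n : ℤ} (ha : IsUnit (a n).det) :
    IsUnit (wronskianForm (R := R) a n).det := by
  have hA := map_mul_map_nonsing_inv (algebraMap 𝕜 R) ha
  have hAT : ((a n).map (algebraMap 𝕜 R))ᵀ * ((a n)⁻¹.map (algebraMap 𝕜 R))ᵀ = 1 := by
    rw [← transpose_mul, mul_eq_one_comm.mp hA, transpose_one]
  refine isUnit_det_of_right_inverse (B := fromBlocks 0 (-((a n)⁻¹.map (algebraMap 𝕜 R))ᵀ)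
    ((a n)⁻¹.map (algebraMap 𝕜 R)) 0) ?_
  simp [wronskianForm, fromBlocks_multiply, hA, hAT]

theorem reverse_charpoly_fundamentalMatrix {p : ℕ} (hp : a p = a 0)
    (ha : ∀ n, IsUnit (a n).det) (hb : ∀ n, (b n)ᵀ = b n) :
    (fundamentalMatrix a b x p).charpoly.reverse = (fundamentalMatrix a b x p).charpoly := by
  have hA₀ : IsUnit ((a 0).map (algebraMap 𝕜 R)).det := by
    simpa [← RingHom.mapMatrix_apply, ← RingHom.map_det] using (ha 0).map (algebraMap 𝕜 R)
  have hdet : (fundamentalMatrix a b x p).det = 1 := by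
    have h := det_fundamentalMatrix_mul a b x ha p
    rw [hp] at h
    exact (IsUnit.mul_eq_right hA₀).mp h
  refine reverse_charpoly_of_transpose_mul_mul_self _ (wronskianForm a 0) ?_
    (isUnit_det_wronskianForm a (ha 0)) hdet (by simp [Fintype.card_sum])
  have hW : wronskianForm (R := R) a p = wronskianForm a 0 := by
    rw [wronskianForm, wronskianForm, hp]
  simpa only [hW] using transpose_fundamentalMatrix_mul_wronskianForm_mul a b x ha hb p

end Jacobi

theorem matSol_add_two {m : ℕ} (a b : ℤ → Matrix (Fin m) (Fin m) ℝ) (z : ℂ)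
    (y₀ y₁ : Matrix (Fin m) (Fin m) ℂ) (n : ℕ) :
    matSol a b z y₀ y₁ (n + 2) =
      -((a (n + 1))⁻¹.map (algebraMap ℝ ℂ) * ((a n).map (algebraMap ℝ ℂ))ᵀ) *
          matSol a b z y₀ y₁ n +
        (a (n + 1))⁻¹.map (algebraMap ℝ ℂ) * (z • 1 - (b (n + 1)).map (algebraMap ℝ ℂ)) *
          matSol a b z y₀ y₁ (n + 1) := by
  rw [matSol, Complex.coe_algebraMap, Matrix.mul_sub, Matrix.neg_mul, Matrix.mul_assoc,
    Matrix.mul_assoc, neg_add_eq_sub]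

theorem fromBlocks_matSol_eq_fundamentalMatrix {m : ℕ} (a b : ℤ → Matrix (Fin m) (Fin m) ℝ)
    (z : ℂ) (n : ℕ) :
    fromBlocks (matSol a b z 1 0 n) (matSol a b z 0 1 n) (matSol a b z 1 0 (n + 1))
      (matSol a b z 0 1 (n + 1)) = fundamentalMatrix a b z n := by
  induction n with
  | zero => exact fromBlocks_one
  | succ n ih =>
    rw [fundamentalMatrix, ← ih, transferMatrix, fromBlocks_multiply, matSol_add_two,
      matSol_add_two]
    simp

theorem monodromy_eq_fundamentalMatrix {m : ℕ} (a b : ℤ → Matrix (Fin m) (Fin m) ℝ) (p : ℕ)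
    (z : ℂ) : monodromy a b p z = fundamentalMatrix a b z p :=
  fromBlocks_matSol_eq_fundamentalMatrix a b z p

theorem Dfun_eq_eval₂_charpoly {m : ℕ} (a b : ℤ → Matrix (Fin m) (Fin m) ℝ) (p : ℕ) (z τ : ℂ) :
    Dfun a b p z τ =
      (fundamentalMatrix a b (X : ℝ[X]) p).charpoly.eval₂ (aeval (R := ℝ) z).toRingHom τ := by
  rw [Dfun, monodromy_eq_fundamentalMatrix,
    det_sub_smul_one_of_even _ _ (by simp [Fintype.card_sum]), ← eval_map, ← charpoly_map,
    AlgHom.toRingHom_eq_coe, AlgHom.coe_toRingHom, map_fundamentalMatrix, aeval_X, eval_charpoly,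
    smul_one_eq_diagonal, scalar_apply]

theorem evalPhi_eq_eval₂ (Φ : ℝ[X][X]) (z ν : ℂ) :
    evalPhi Φ z ν = Φ.eval₂ (aeval (R := ℝ) z).toRingHom ν := by
  rw [evalPhi, eval_map, ← coe_evalRingHom, hom_eval₂, coe_evalRingHom, eval_C]
  congr 1
  ext <;> simp

theorem eq_of_evalPhi_eq {Φ Ψ : ℝ[X][X]} (h : ∀ z ν, evalPhi Φ z ν = evalPhi Ψ z ν) : Φ = Ψ := by
  set F := mapRingHom Complex.ofRealHom
  have hroot (ν : ℂ) : (Φ.map F - Ψ.map F).IsRoot (C ν) := by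
    refine Polynomial.funext fun z => ?_
    rw [eval_sub, eval_sub, eval_zero, sub_eq_zero]
    exact h z ν
  have hzero := eq_zero_of_infinite_isRoot _
    ((Set.infinite_range_of_injective C_injective).mono (Set.range_subset_iff.mpr hroot))
  exact map_injective F (map_injective _ Complex.ofReal_injective) (sub_eq_zero.mp hzero)

theorem exists_ne_zero_half_add_inv_eq (ν : ℂ) : ∃ τ : ℂ, τ ≠ 0 ∧ (τ + τ⁻¹) / 2 = ν := by
  obtain ⟨s, hs⟩ := IsAlgClosed.exists_pow_nat_eq (ν ^ 2 - 1) two_pos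
  have hprod : (ν + s) * (ν - s) = 1 := by linear_combination -hs
  have hτ : ν + s ≠ 0 := left_ne_zero_of_mul_eq_one hprod
  refine ⟨ν + s, hτ, ?_⟩
  rw [inv_eq_of_mul_eq_one_right hprod]
  ring

section lyapunov

variable {m : ℕ} (a b : ℤ → Matrix (Fin m) (Fin m) ℝ) (p : ℕ)

theorem natDegree_charpoly_fundamentalMatrix :
    (fundamentalMatrix a b (X : ℝ[X]) p).charpoly.natDegree = 2 * m := by
  rw [charpoly_natDegree_eq_dim, Fintype.card_sum, Fintype.card_fin, two_mul]

noncomputable def lyapunovPolynomial : ℝ[X][X] :=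
  C (C ((2 : ℝ) ^ m)⁻¹) * palindromicReduction (fundamentalMatrix a b (X : ℝ[X]) p).charpoly m

theorem coeff_lyapunovPolynomial_self : (lyapunovPolynomial a b p).coeff m = 1 := by
  have hlead := (charpoly_monic (fundamentalMatrix a b (X : ℝ[X]) p)).coeff_natDegree
  rw [natDegree_charpoly_fundamentalMatrix] at hlead
  rw [lyapunovPolynomial, coeff_C_mul, coeff_palindromicReduction_self, hlead, mul_one,
    ← C_ofNat, ← C_pow, ← C_mul, inv_mul_cancel₀ (by positivity), C_1]

theorem natDegree_lyapunovPolynomial_le : (lyapunovPolynomial a b p).natDegree ≤ m :=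
  (natDegree_C_mul_le _ _).trans (natDegree_palindromicReduction_le _ m)

theorem monic_lyapunovPolynomial : (lyapunovPolynomial a b p).Monic :=
  monic_of_natDegree_le_of_coeff_eq_one m (natDegree_lyapunovPolynomial_le a b p)
    (coeff_lyapunovPolynomial_self a b p)

theorem degree_lyapunovPolynomial : (lyapunovPolynomial a b p).degree = m := by
  rw [degree_eq_natDegree (monic_lyapunovPolynomial a b p).ne_zero,
    natDegree_eq_of_le_of_coeff_ne_zero (natDegree_lyapunovPolynomial_le a b p)
      (by rw [coeff_lyapunovPolynomial_self]; exact one_ne_zero)]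

theorem Dfun_eq_lyapunovPolynomial (ha_per : a p = a 0) (ha_inv : ∀ n, IsUnit (a n).det)
    (hb_sym : ∀ n, (b n)ᵀ = b n) (z : ℂ) {τ : ℂ} (hτ : τ ≠ 0) :
    Dfun a b p z τ = (2 * τ) ^ m * evalPhi (lyapunovPolynomial a b p) z ((τ + τ⁻¹) / 2) := by
  have hdeg := natDegree_charpoly_fundamentalMatrix a b p
  have hrefl : (fundamentalMatrix a b (X : ℝ[X]) p).charpoly.reflect (2 * m) =
      (fundamentalMatrix a b (X : ℝ[X]) p).charpoly := by
    rw [← hdeg]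
    exact reverse_charpoly_fundamentalMatrix a b X ha_per ha_inv hb_sym
  rw [Dfun_eq_eval₂_charpoly, eval₂_eq_pow_mul_eval₂_palindromicReduction _ hdeg.le hrefl hτ,
    evalPhi_eq_eval₂, lyapunovPolynomial, eval₂_mul, eval₂_C]
  simp only [AlgHom.toRingHom_eq_coe, RingHom.coe_coe, aeval_C, Complex.coe_algebraMap]
  push_cast
  field_simp
  ring

end lyapunov

theorem exists_unique_Phi_general (m p : ℕ)
    (a b : ℤ → Matrix (Fin m) (Fin m) ℝ)
    (ha_per : ∀ n : ℤ, a (n + p) = a n)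
    (hb_sym : ∀ n : ℤ, (b n)ᵀ = b n) (ha_inv : ∀ n : ℤ, IsUnit (a n).det) :
    ∃! Φ : Polynomial (Polynomial ℝ),
      Φ.degree = (m : ℕ) ∧ Φ.Monic ∧
      ∀ z τ : ℂ, τ ≠ 0 →
        Dfun a b p z τ = (2 * τ) ^ m * evalPhi Φ z ((τ + τ⁻¹) / 2) := by
  have hspec := Dfun_eq_lyapunovPolynomial a b p (by simpa using ha_per 0) ha_inv hb_sym
  refine ⟨lyapunovPolynomial a b p, ⟨degree_lyapunovPolynomial a b p,
    monic_lyapunovPolynomial a b p, fun z τ hτ => hspec z hτ⟩, ?_⟩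
  rintro Ψ ⟨-, -, hΨ⟩
  refine eq_of_evalPhi_eq fun z ν => ?_
  obtain ⟨τ, hτ, rfl⟩ := exists_ne_zero_half_add_inv_eq ν
  exact mul_left_cancel₀ (pow_ne_zero m (mul_ne_zero two_ne_zero hτ))
    ((hΨ z τ hτ).symm.trans (hspec z hτ))

/-- There is a unique real two-variable polynomial `Φ(z,ν)`, monic of degree `m` in `ν`,
with `D(z,τ) = (2τ)^m Φ(z, (τ+τ⁻¹)/2)` for all `z` and all `τ ≠ 0`. -/
theorem exists_unique_Phi (m p : ℕ) (hm : 1 ≤ m) (hp : 1 ≤ p)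
    (a b : ℤ → Matrix (Fin m) (Fin m) ℝ)
    (ha_per : ∀ n : ℤ, a (n + p) = a n) (hb_per : ∀ n : ℤ, b (n + p) = b n)
    (hb_sym : ∀ n : ℤ, (b n)ᵀ = b n) (ha_inv : ∀ n : ℤ, IsUnit (a n).det) :
    ∃! Φ : Polynomial (Polynomial ℝ),
      Φ.degree = (m : ℕ) ∧ Φ.Monic ∧
      ∀ z τ : ℂ, τ ≠ 0 →
        Dfun a b p z τ = (2 * τ) ^ m * evalPhi Φ z ((τ + τ⁻¹) / 2) :=
  exists_unique_Phi_general m p a b ha_per hb_sym ha_inv
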